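/- Assume p ≠ 2. There do not exist elements a, b ∈ M_ω fixed by every element of G34 such that u12 = (σ1 − 1)·a + (σ2 − 1)·b in M_ω, where u12 is viewed in M_ω via the inclusions A_2(G12) ⊆ Q ⊆ M_ω. -/

import Mathlib

/-!
The paper's map `π : A₂(G₁₂) → ℤ/p`, `(v₁, v₂) ↦ Σ_g v₁(g)·(σ₂-exponent of g)`, is the
`ε`-coefficient of the ring map `ℤ[G₁₂] → 𝔽_p[ε]`, `g ↦ 1 + (σ₂-exponent of g)·ε`, so it obeys a
Leibniz rule. Since the first coordinate of an element of `A₂(G₁₂)` has augmentation divisible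
by `p`, this makes `π` invariant under `G₁₂`, and it gives `π(u₁₂) = 1` and
`π(c₁₂(x, y)) = -(σ₁-exponent of y)·(σ₂-exponent of x)`.

Apply `π` to the `A₂(G₁₂)`-component of `u₁₂ = (σ₁ - 1)a + (σ₂ - 1)b`. The terms `σᵢx - x` with
`x ∈ A₂(G₁₂)` vanish, the twist `ω(σ₁, -)` contributes nothing, and the twist `ω(σ₂, -)`
contributes `-Σ_g b(g)·(σ₁-exponent of g)`, where `b(g)` are the `I[G]`-coefficients of `b`.
These are constant on `G₃₄`-cosets, so the sum vanishes mod `p`, and `1 = 0` in `ℤ/p`.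
-/

open MonoidAlgebra

set_option maxHeartbeats 1000000
set_option synthInstance.maxHeartbeats 400000

noncomputable section

/-! ## Generic (unbundled) group-cohomology notions in low degree -/

/-- `f : G → A` is a 1-cocycle for the (unbundled) action `act`. -/
def IsOneCocycle {G : Type*} [Group G] {A : Type*} [AddCommGroup A]
    (act : G → A → A) (f : G → A) : Prop :=
  ∀ g h : G, f (g * h) = act g (f h) + f g

/-- `f : G → A` is a 1-coboundary for the (unbundled) action `act`. -/
def IsOneCoboundary {G : Type*} [Group G] {A : Type*} [AddCommGroup A]
    (act : G → A → A) (f : G → A) : Prop :=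
  ∃ a : A, ∀ g : G, f g = act g a - a

/-- `f : G → G → A` is a 2-coboundary for the (unbundled) action `act`. -/
def IsTwoCoboundary {G : Type*} [Group G] {A : Type*} [AddCommGroup A]
    (act : G → A → A) (f : G → G → A) : Prop :=
  ∃ c : G → A, ∀ g h : G, f g h = act g (c h) - c (g * h) + c g

/-- restriction of an (unbundled) action to a subgroup. -/
def resAct {G : Type*} [Group G] {A : Type*} (H : Subgroup G) (act : G → A → A) :
    H → A → A := fun h => act (h : G)

/-! ## Augmentation ideal for a general group -/

/-- the augmentation map `Z[G] → Z`. -/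
def augGen (G : Type*) [Group G] : MonoidAlgebra ℤ G →+* ℤ :=
  (MonoidAlgebra.lift ℤ ℤ G 1).toRingHom

/-- the augmentation ideal `I[G] ⊆ Z[G]`. -/
def IGen (G : Type*) [Group G] : Ideal (MonoidAlgebra ℤ G) := RingHom.ker (augGen G)

/-- the action of `G` on `I[G]` by left multiplication. -/
def actIGen (G : Type*) [Group G] (g : G) (y : ↥(IGen G)) : ↥(IGen G) :=
  ⟨of ℤ G g * y.val, by
    have h0 : augGen G y.val = 0 := y.2
    simp [IGen, RingHom.mem_ker, map_mul, h0]⟩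

/-- the distinguished 1-cocycle `d_H : H → I[G]`, `h ↦ h - 1`. -/
def dGen {G : Type*} [Group G] (H : Subgroup G) (h : H) : ↥(IGen G) :=
  ⟨of ℤ G (h : G) - 1, by simp [IGen, RingHom.mem_ker, map_sub, augGen]⟩

/-! ## The groups of the paper -/

/-- the elementary abelian group `G₁₂` of order `p²`. -/
abbrev G12t (p : ℕ) := Multiplicative (ZMod p × ZMod p)
/-- a cyclic group of order `p`. -/
abbrev Cpt (p : ℕ) := Multiplicative (ZMod p)
/-- the elementary abelian group `G = ⟨σ₁⟩ × ⟨σ₂⟩ × ⟨σ₃⟩ × ⟨σ₄⟩` of order `p⁴`. -/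
abbrev Gp (p : ℕ) := Multiplicative (ZMod p × ZMod p × ZMod p × ZMod p)

def t1 (p : ℕ) : G12t p := Multiplicative.ofAdd (1, 0)
def t2 (p : ℕ) : G12t p := Multiplicative.ofAdd (0, 1)
def c1g (p : ℕ) : Cpt p := Multiplicative.ofAdd 1
def s1 (p : ℕ) : Gp p := Multiplicative.ofAdd (1, 0, 0, 0)
def s2 (p : ℕ) : Gp p := Multiplicative.ofAdd (0, 1, 0, 0)
def s3 (p : ℕ) : Gp p := Multiplicative.ofAdd (0, 0, 1, 0)
def s4 (p : ℕ) : Gp p := Multiplicative.ofAdd (0, 0, 0, 1)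

/-- the group ring `Z[G₁₂]`. -/
abbrev R12 (p : ℕ) := MonoidAlgebra ℤ (G12t p)
/-- the group ring `Z[⟨σ⟩]` of a cyclic group of order `p`. -/
abbrev RCp (p : ℕ) := MonoidAlgebra ℤ (Cpt p)
/-- the group ring `Z[G]`. -/
abbrev RG (p : ℕ) := MonoidAlgebra ℤ (Gp p)

/-- the quotient map `G → G₁₂ = G/G₃₄`. -/
def π12 (p : ℕ) : Gp p →* G12t p :=
  AddMonoidHom.toMultiplicative
    { toFun := fun v => (v.1, v.2.1), map_zero' := rfl, map_add' := fun _ _ => rfl }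

/-- the quotient map `G → ⟨σ₃⟩ = G/⟨σ₁,σ₂,σ₄⟩`. -/
def π3 (p : ℕ) : Gp p →* Cpt p :=
  AddMonoidHom.toMultiplicative
    { toFun := fun v => v.2.2.1, map_zero' := rfl, map_add' := fun _ _ => rfl }

/-- the quotient map `G → ⟨σ₄⟩ = G/⟨σ₁,σ₂,σ₃⟩`. -/
def π4 (p : ℕ) : Gp p →* Cpt p :=
  AddMonoidHom.toMultiplicative
    { toFun := fun v => v.2.2.2, map_zero' := rfl, map_add' := fun _ _ => rfl }

/-- the inclusion `G₁₂ → G`. -/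
def emb12 (p : ℕ) : G12t p →* Gp p :=
  AddMonoidHom.toMultiplicative
    { toFun := fun v => (v.1, v.2, 0, 0), map_zero' := rfl,
      map_add' := fun _ _ => by ext <;> simp }

/-- the subgroup `G₁₂ = ⟨σ₁, σ₂⟩ ≤ G`. -/
def G12sub (p : ℕ) : Subgroup (Gp p) := Subgroup.closure {s1 p, s2 p}
/-- the subgroup `G₃₄ = ⟨σ₃, σ₄⟩ ≤ G`. -/
def G34sub (p : ℕ) : Subgroup (Gp p) := Subgroup.closure {s3 p, s4 p}

/-! ## The lattice `A₂(G₁₂)` and its distinguished elements -/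

/-- the map `Z[G₁₂]·d₁ ⊕ Z[G₁₂]·d₂ → I[G₁₂] ⊆ Z[G₁₂]`, `dᵢ ↦ σᵢ - 1`. -/
def d12map (p : ℕ) : (R12 p × R12 p) →ₗ[R12 p] R12 p :=
  (LinearMap.toSpanSingleton (R12 p) (R12 p) (of ℤ (G12t p) (t1 p) - 1)).comp
      (LinearMap.fst (R12 p) (R12 p) (R12 p)) +
  (LinearMap.toSpanSingleton (R12 p) (R12 p) (of ℤ (G12t p) (t2 p) - 1)).comp
      (LinearMap.snd (R12 p) (R12 p) (R12 p))

/-- the lattice `A₂(G₁₂)`, the kernel of `Z[G₁₂]·d₁ ⊕ Z[G₁₂]·d₂ → I[G₁₂]`. -/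
def A2G12 (p : ℕ) : Submodule (R12 p) (R12 p × R12 p) := LinearMap.ker (d12map p)

/-- `u₁₂ = (σ₂-1)d₁ - (σ₁-1)d₂` as an element of `Z[G₁₂]·d₁ ⊕ Z[G₁₂]·d₂`. -/
def u12raw (p : ℕ) : R12 p × R12 p :=
  (of ℤ (G12t p) (t2 p) - 1, -(of ℤ (G12t p) (t1 p) - 1))

/-- the norm element `N = 1 + g + ⋯ + g^(p-1)` of a group ring. -/
def NN (p : ℕ) {G : Type*} [CommGroup G] (g : G) : MonoidAlgebra ℤ G :=
  ∑ k ∈ Finset.range p, of ℤ G g ^ k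

/-- `b₁ = N₁·d₁`. -/
def b1raw (p : ℕ) : R12 p × R12 p := (NN p (t1 p), 0)
/-- `b₂ = N₂·d₂`. -/
def b2raw (p : ℕ) : R12 p × R12 p := (0, NN p (t2 p))

lemma ofAdd_pow_p (p : ℕ) {A : Type*} [AddCommGroup A] (a : A) (h : p • a = 0) :
    (Multiplicative.ofAdd a) ^ p = 1 := by
  rw [← ofAdd_nsmul, h]; rfl

lemma zmod_p_smul (p : ℕ) (x : ZMod p) : p • x = 0 := by
  rw [nsmul_eq_mul, ZMod.natCast_self, zero_mul]

lemma t1_pow_p (p : ℕ) : (t1 p) ^ p = 1 := by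
  refine ofAdd_pow_p p _ ?_
  rw [Prod.smul_mk, zmod_p_smul, zmod_p_smul]; rfl

lemma t2_pow_p (p : ℕ) : (t2 p) ^ p = 1 := by
  refine ofAdd_pow_p p _ ?_
  rw [Prod.smul_mk, zmod_p_smul, zmod_p_smul]; rfl

lemma c1g_pow_p (p : ℕ) : (c1g p) ^ p = 1 := by
  refine ofAdd_pow_p p _ (zmod_p_smul p _)

lemma NN_mul (p : ℕ) {G : Type*} [CommGroup G] (g : G) (h : g ^ p = 1) :
    NN p g * (of ℤ G g - 1) = 0 := by
  rw [NN, geom_sum_mul, ← map_pow, h, map_one, sub_self]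

lemma u12raw_mem (p : ℕ) : u12raw p ∈ A2G12 p := by
  simp only [A2G12, LinearMap.mem_ker, d12map, LinearMap.add_apply, LinearMap.comp_apply,
    LinearMap.fst_apply, LinearMap.snd_apply, LinearMap.toSpanSingleton_apply, u12raw,
    smul_eq_mul]
  ring

lemma b1raw_mem (p : ℕ) : b1raw p ∈ A2G12 p := by
  simp only [A2G12, LinearMap.mem_ker, d12map, LinearMap.add_apply, LinearMap.comp_apply,
    LinearMap.fst_apply, LinearMap.snd_apply, LinearMap.toSpanSingleton_apply, b1raw,
    smul_eq_mul, zero_mul, add_zero]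
  exact NN_mul p _ (t1_pow_p p)

lemma b2raw_mem (p : ℕ) : b2raw p ∈ A2G12 p := by
  simp only [A2G12, LinearMap.mem_ker, d12map, LinearMap.add_apply, LinearMap.comp_apply,
    LinearMap.fst_apply, LinearMap.snd_apply, LinearMap.toSpanSingleton_apply, b2raw,
    smul_eq_mul, zero_mul, zero_add]
  exact NN_mul p _ (t2_pow_p p)

/-- `u₁₂` as an element of `A₂(G₁₂)`. -/
def u12e (p : ℕ) : ↥(A2G12 p) := ⟨u12raw p, u12raw_mem p⟩
/-- `b₁` as an element of `A₂(G₁₂)`. -/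
def b1e (p : ℕ) : ↥(A2G12 p) := ⟨b1raw p, b1raw_mem p⟩
/-- `b₂` as an element of `A₂(G₁₂)`. -/
def b2e (p : ℕ) : ↥(A2G12 p) := ⟨b2raw p, b2raw_mem p⟩

/-- the action of `G₁₂` on `A₂(G₁₂)`. -/
def actA2 (p : ℕ) (x : G12t p) (v : ↥(A2G12 p)) : ↥(A2G12 p) :=
  of ℤ (G12t p) x • v

/-! ## The cyclic lattice `A₂(⟨σ⟩)` -/

/-- the map `Z[⟨σ⟩]·d → I[⟨σ⟩]`, `d ↦ σ - 1`. -/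
def dcmap (p : ℕ) : RCp p →ₗ[RCp p] RCp p :=
  LinearMap.toSpanSingleton (RCp p) (RCp p) (of ℤ (Cpt p) (c1g p) - 1)

/-- the lattice `A₂(⟨σ⟩)` for a cyclic group of order `p`. -/
def A2C (p : ℕ) : Submodule (RCp p) (RCp p) := LinearMap.ker (dcmap p)

/-- the norm element `N = 1 + σ + ⋯ + σ^(p-1)` as an element of `A₂(⟨σ⟩)`. -/
def NCe (p : ℕ) : ↥(A2C p) :=
  ⟨NN p (c1g p), by
    simp only [A2C, LinearMap.mem_ker, dcmap, LinearMap.toSpanSingleton_apply, smul_eq_mul]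
    exact NN_mul p _ (c1g_pow_p p)⟩

/-- the action of `G` on `A₂(⟨σⱼ⟩)` through a projection `π : G → ⟨σⱼ⟩`. -/
def actCvia (p : ℕ) (π : Gp p →* Cpt p) (g : Gp p) (v : ↥(A2C p)) : ↥(A2C p) :=
  of ℤ (Cpt p) (π g) • v

/-! ## The explicit canonical 2-cocycles -/

/-- the elements `u_{m,n} ∈ A₂(G₁₂)` (equation (13) of the paper). -/
def umn (p : ℕ) (m1 m2 n1 n2 : ℕ) : ↥(A2G12 p) :=
  (-(of ℤ (G12t p) (t1 p ^ m1) * ∑ j ∈ Finset.range n1, ∑ i ∈ Finset.range m2,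
      of ℤ (G12t p) (t1 p ^ i * t2 p ^ j))) • u12e p +
  (of ℤ (G12t p) (t1 p ^ n1) * ∑ j ∈ Finset.range n2, ∑ i ∈ Finset.range m1,
      of ℤ (G12t p) (t1 p ^ i * t2 p ^ j)) • u12e p

/-- the explicit 2-cocycle `c₁₂` representing the canonical class `[c_{G₁₂}]`. -/
def c12coc (p : ℕ) (x y : G12t p) : ↥(A2G12 p) :=
  let m1 := (Multiplicative.toAdd x).1.val
  let m2 := (Multiplicative.toAdd x).2.val
  let n1 := (Multiplicative.toAdd y).1.val
  let n2 := (Multiplicative.toAdd y).2.val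
  of ℤ (G12t p) (t1 p ^ m1) • umn p 0 m2 n1 0 +
    ((m1 + n1) / p) • b1e p +
    ((m2 + n2) / p) • (of ℤ (G12t p) (t1 p ^ ((m1 + n1) % p)) • b2e p)

/-- the explicit 2-cocycle representing the canonical class of a cyclic group of
order `p` with coefficients in `A₂(⟨σ⟩)`. -/
def ccyc (p : ℕ) (x y : Cpt p) : ↥(A2C p) :=
  if p ≤ (Multiplicative.toAdd x).val + (Multiplicative.toAdd y).val then NCe p else 0

/-! ## The lattice `Q = A₂(G₁₂) ⊕ K₃ ⊕ K₄` -/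

/-- `K_j = A₂(⟨σⱼ⟩) ⊕ Z[⟨σⱼ⟩]`. -/
abbrev Kc (p : ℕ) := ↥(A2C p) × RCp p

/-- the carrier of the `G`-lattice `Q = A₂(G₁₂) ⊕ K₃ ⊕ K₄`. -/
abbrev Qc (p : ℕ) := ↥(A2G12 p) × Kc p × Kc p

/-- the action of `G` on `Q`: `G₁₂` acts naturally on `A₂(G₁₂)` and trivially on
`K₃`, `K₄`; `⟨σⱼ⟩` acts naturally on `K_j` and trivially elsewhere. -/
def actQ (p : ℕ) (g : Gp p) (q : Qc p) : Qc p :=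
  (of ℤ (G12t p) (π12 p g) • q.1,
   (of ℤ (Cpt p) (π3 p g) • q.2.1.1, of ℤ (Cpt p) (π3 p g) * q.2.1.2),
   (of ℤ (Cpt p) (π4 p g) • q.2.2.1, of ℤ (Cpt p) (π4 p g) * q.2.2.2))

/-- the 2-cocycle `ω = inf(c₁₂) - inf(c₃) - inf(c₄)` with values in `Q`. -/
def ωc (p : ℕ) (g g' : Gp p) : Qc p :=
  (c12coc p (π12 p g) (π12 p g'),
   (-(ccyc p (π3 p g) (π3 p g')), 0),
   (-(ccyc p (π4 p g) (π4 p g')), 0))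

/-- the order of the restriction of `[ω]` to a subgroup `H ≤ G` in `H²(H, Q)`. -/
def nOrd (p : ℕ) (H : Subgroup (Gp p)) : ℕ :=
  sInf {n : ℕ | 0 < n ∧
    IsTwoCoboundary (resAct H (actQ p)) fun h h' => n • ωc p (h : Gp p) (h' : Gp p)}

/-! ## The augmentation ideal `I[G]` and the lattice `M_ω` -/

/-- the augmentation map `Z[G] → Z`. -/
def aug (p : ℕ) : RG p →+* ℤ := (MonoidAlgebra.lift ℤ ℤ (Gp p) 1).toRingHom

/-- the augmentation ideal `I[G]`. -/
def IG (p : ℕ) : Ideal (RG p) := RingHom.ker (aug p)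

/-- the action of `G` on `I[G]` by left multiplication. -/
def actIG (p : ℕ) (g : Gp p) (y : ↥(IG p)) : ↥(IG p) :=
  ⟨of ℤ (Gp p) g * y.val, by
    have h0 : aug p y.val = 0 := y.2
    simp [IG, RingHom.mem_ker, map_mul, h0]⟩

/-- the 1-cocycle `d_H : H → I[G]`, `h ↦ h - 1`. -/
def dH (p : ℕ) (H : Subgroup (Gp p)) (h : H) : ↥(IG p) :=
  ⟨of ℤ (Gp p) (h : Gp p) - 1, by simp [IG, RingHom.mem_ker, map_sub, aug]⟩

/-- the carrier of the `G`-lattice `M_ω = Q ⊕ I[G]`. -/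
abbrev Mc (p : ℕ) := Qc p × ↥(IG p)

/-- the `Q`-valued correction term of the twisted action on `M_ω`:
`θ(g, Σ a_{g'} g') = Σ a_{g'} ω(g, g')`; on `y ∈ I[G]` (so `Σ a_{g'} = 0` and
`y = Σ a_{g'} (g' - 1)`) this is the `Q`-component of `g·(0, y)`. -/
def θω (p : ℕ) (g : Gp p) (y : RG p) : Qc p :=
  Finsupp.sum y.coeff fun g' a => a • ωc p g g'

/-- the twisted action of `G` on `M_ω = Q ⊕ I[G]`: `g(x,0) = (gx, 0)` and
`g(0, g'-1) = (ω(g,g'), g(g'-1))`, extended `Z`-linearly. -/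
def actM (p : ℕ) (g : Gp p) (m : Mc p) : Mc p :=
  (actQ p g m.1 + θω p g m.2.val, actIG p g m.2)

/-! ## The map `π : A₂(G₁₂) → Z/pZ` -/

/-- the `G₁₂`-module homomorphism `π : A₂(G₁₂) → Z/pZ`, determined by
`π(x·u₁₂ + y·b₁ + z·b₂) = ε(x) mod p`; concretely it sends `v = (v₁, v₂)` to
`Σ_g v₁(g)·(exponent of σ₂ in g)`. -/
def πmap (p : ℕ) (v : ↥(A2G12 p)) : ZMod p :=
  Finsupp.sum (v : R12 p × R12 p).1.coeff fun g a => (a : ZMod p) * (Multiplicative.toAdd g).2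

/-! ## The set `𝓗` of subgroups, the cochains `v_H`, and the lattice `M` -/

/-- the set of subgroups `𝓗 = {G} ∪ {⟨τ, σ₃, σ₄⟩ : τ ∈ G₁₂}`. -/
def HH (p : ℕ) : Set (Subgroup (Gp p)) :=
  insert ⊤ {H | ∃ τ ∈ G12sub p, H = Subgroup.closure {τ, s3 p, s4 p}}

/-- the 1-cochain `v_H : H₁₂ → A₂(G₁₂)`, `v_H(h̄₁) = Σ_{h̄ ∈ H₁₂} c₁₂(h̄₁, h̄)`,
here inflated to a function of `h̄₁ ∈ G₁₂`. -/
def vH (p : ℕ) (H : Subgroup (Gp p)) (x : G12t p) : ↥(A2G12 p) :=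
  ∑ᶠ h' : ↥(H.map (π12 p)), c12coc p x (h' : G12t p)

/-- the 1-cochain `f_H : H → M_ω`, `f_H(h) = (z_H(h) - v_H(h̄), n_H·(h-1))`,
built from a choice of 1-cochain `z_H : H → K₃ ⊕ K₄`. -/
def fHof (p : ℕ) (H : Subgroup (Gp p)) (zH : H → Kc p × Kc p) (h : H) : Mc p :=
  ((-(vH p H (π12 p (h : Gp p))), (zH h).1, (zH h).2),
   (nOrd p H) • dH p H h)

/-- the carrier of the permutation lattice `P = ⊕_{H ∈ 𝓗} Z[G/H]`. -/
abbrev Pc (p : ℕ) := ∀ H : ↥(HH p), ((Gp p ⧸ (H : Subgroup (Gp p))) →₀ ℤ)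

/-- the carrier of the `G`-lattice `M = M_ω ⊕ P`. -/
abbrev MC (p : ℕ) := Mc p × Pc p

/-- the action of `G` on `M = M_ω ⊕ P`, twisted by a family of 1-cocycles
`f_H : H → M_ω` (`H ∈ 𝓗`): `g(x, 0) = (gx, 0)` and
`g(0, u_{gᵢH}) = (gⱼ·f_H(h), u_{gⱼH})` where `g·gᵢ = gⱼ·h`, `h ∈ H`, and the coset
representatives are chosen by `Quotient.out`. -/
def actMFull (p : ℕ) (fH : ∀ H : ↥(HH p), (↥(H.val) → Mc p))
    (g : Gp p) (m : MC p) : MC p :=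
  (actM p g m.1 +
     ∑ᶠ H : ↥(HH p), Finsupp.sum (m.2 H) fun c a =>
       a • actM p (Quotient.out (g • c))
         (fH H ⟨(Quotient.out (g • c))⁻¹ * (g * Quotient.out c), by
            rw [← QuotientGroup.eq, QuotientGroup.out_eq', ← smul_eq_mul,
              MulAction.Quotient.mk_smul_out]⟩),
   fun H => Finsupp.mapDomain (fun c => g • c) (m.2 H))

/-- the map `π' : M → Z/pZ`, `(x₀, x₁, x₂, y, z) ↦ π(x₀)`. -/
def πmap' (p : ℕ) (m : MC p) : ZMod p := πmap p m.1.1.1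

/-- the norm element `N₃₄ = Σ_{g ∈ G₃₄} g ∈ Z[G]`. -/
def N34 (p : ℕ) : RG p := ∑ᶠ g : ↥(G34sub p), of ℤ (Gp p) (g : Gp p)

/-- the augmentation map `Z[G₁₂] → Z`. -/
def aug12 (p : ℕ) : R12 p →+* ℤ := (MonoidAlgebra.lift ℤ ℤ (G12t p) 1).toRingHom

open TrivSqZeroExt

section DualNumbers

variable {R G : Type*} [CommRing R] [Group G]

def dualNumberChar (e : G →* Multiplicative R) : G →* TrivSqZeroExt R R where
  toFun g := 1 + inr (Multiplicative.toAdd (e g))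
  map_one' := by simp
  map_mul' g h := by
    rw [map_mul, toAdd_mul, inr_add, add_mul, mul_add, mul_add, one_mul, mul_one, one_mul,
      inr_mul_inr, add_zero]
    abel

def liftDualNumber (e : G →* Multiplicative R) : MonoidAlgebra ℤ G →ₐ[ℤ] TrivSqZeroExt R R :=
  MonoidAlgebra.lift ℤ _ G (dualNumberChar e)

variable (e : G →* Multiplicative R)

lemma liftDualNumber_of (g : G) :
    liftDualNumber e (of ℤ G g) = 1 + inr (Multiplicative.toAdd (e g)) :=
  MonoidAlgebra.lift_of _ _

lemma fst_liftDualNumber (x : MonoidAlgebra ℤ G) :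
    (liftDualNumber e x).fst = augGen G x := by
  rw [liftDualNumber, augGen, AlgHom.toRingHom_eq_coe, RingHom.coe_coe, MonoidAlgebra.lift_apply,
    MonoidAlgebra.lift_apply, Finsupp.sum, Finsupp.sum, fst_sum, Int.cast_sum]
  refine Finset.sum_congr rfl fun g _ => ?_
  simp [dualNumberChar]

lemma snd_liftDualNumber (x : MonoidAlgebra ℤ G) :
    (liftDualNumber e x).snd = x.coeff.sum fun g a => (a : R) * Multiplicative.toAdd (e g) := by
  rw [liftDualNumber, MonoidAlgebra.lift_apply, Finsupp.sum, snd_sum]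
  refine Finset.sum_congr rfl fun g _ => ?_
  simp [dualNumberChar, zsmul_eq_mul, mul_comm]

lemma snd_liftDualNumber_mul (x y : MonoidAlgebra ℤ G) :
    (liftDualNumber e (x * y)).snd =
      augGen G x * (liftDualNumber e y).snd + augGen G y * (liftDualNumber e x).snd := by
  rw [map_mul, snd_mul, fst_liftDualNumber, fst_liftDualNumber, smul_eq_mul, op_smul_eq_mul,
    mul_comm (liftDualNumber e x).snd]

lemma snd_liftDualNumber_of_sub_one (g : G) :
    (liftDualNumber e (of ℤ G g - 1)).snd = Multiplicative.toAdd (e g) := by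
  rw [map_sub, map_one, liftDualNumber_of, add_sub_cancel_left, snd_inr]

lemma augGen_of_sub_one (g : G) : augGen G (of ℤ G g - 1) = 0 := by
  simp [augGen]

end DualNumbers

lemma Subgroup.sum_eq_zero_of_mul_right_invariant {G M : Type*} [Group G] [Fintype G]
    [AddCommMonoid M] (H : Subgroup G) (hH : ∀ m : M, Nat.card H • m = 0) (φ : G → M)
    (hφ : ∀ g, ∀ h ∈ H, φ (g * h) = φ g) : ∑ g, φ g = 0 := by
  classical
  rw [← Fintype.sum_fiberwise (QuotientGroup.mk (s := H)) φ]
  refine Finset.sum_eq_zero fun c _ => ?_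
  have hfiber : ∀ x : {g : G // (g : G ⧸ H) = c}, φ x = φ c.out := by
    rintro ⟨x, rfl⟩
    obtain ⟨h, hx⟩ := QuotientGroup.mk_out_eq_mul H x
    rw [hx, hφ _ h h.2]
  have hcard : Fintype.card {g : G // (g : G ⧸ H) = c} = Nat.card H := by
    have := QuotientGroup.card_preimage_mk H {c}
    rw [Nat.card_unique (α := ({c} : Set (G ⧸ H))), mul_one] at this
    rw [Fintype.card_eq_nat_card, ← this]
    rfl
  rw [Fintype.sum_congr _ _ hfiber, Finset.sum_const, Finset.card_univ, hcard, hH]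

section ProjectionToZModP

variable (p : ℕ)

def fstChar : G12t p →* Multiplicative (ZMod p) :=
  AddMonoidHom.toMultiplicative (AddMonoidHom.fst (ZMod p) (ZMod p))

def sndChar : G12t p →* Multiplicative (ZMod p) :=
  AddMonoidHom.toMultiplicative (AddMonoidHom.snd (ZMod p) (ZMod p))

lemma πmap_eq_snd_liftDualNumber (v : ↥(A2G12 p)) :
    πmap p v = (liftDualNumber (sndChar p) (v : R12 p × R12 p).1).snd := by
  rw [snd_liftDualNumber]; rfl

/-- Differentiating `v₁(σ₁ - 1) + v₂(σ₂ - 1) = 0` along the first coordinate. -/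
lemma augGen_fst_A2G12 (v : ↥(A2G12 p)) :
    (augGen (G12t p) (v : R12 p × R12 p).1 : ZMod p) = 0 := by
  have hv : (v : R12 p × R12 p).1 * (of ℤ (G12t p) (t1 p) - 1)
      + (v : R12 p × R12 p).2 * (of ℤ (G12t p) (t2 p) - 1) = 0 := v.2
  have h := congrArg (fun z => (liftDualNumber (fstChar p) z).snd) hv
  simp only [map_add, snd_add, snd_liftDualNumber_mul, snd_liftDualNumber_of_sub_one,
    augGen_of_sub_one, map_zero, snd_zero] at h
  simpa [fstChar, t1, t2] using h

lemma πmap_add (v w : ↥(A2G12 p)) : πmap p (v + w) = πmap p v + πmap p w := by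
  simp only [πmap_eq_snd_liftDualNumber, Submodule.coe_add, Prod.fst_add, map_add, snd_add]

def πHom : ↥(A2G12 p) →+ ZMod p := AddMonoidHom.mk' (πmap p) (πmap_add p)

lemma πHom_apply (v : ↥(A2G12 p)) : πHom p v = πmap p v := rfl

lemma πmap_smul (x : R12 p) (v : ↥(A2G12 p)) :
    πmap p (x • v) = augGen (G12t p) x * πmap p v := by
  rw [πmap_eq_snd_liftDualNumber, πmap_eq_snd_liftDualNumber, SetLike.val_smul, Prod.smul_fst,
    smul_eq_mul, snd_liftDualNumber_mul, augGen_fst_A2G12, zero_mul, add_zero]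

lemma πmap_of_smul (g : G12t p) (v : ↥(A2G12 p)) : πmap p (of ℤ (G12t p) g • v) = πmap p v := by
  simp [πmap_smul, augGen]

lemma πmap_u12e : πmap p (u12e p) = 1 := by
  rw [πmap_eq_snd_liftDualNumber]
  exact snd_liftDualNumber_of_sub_one _ (t2 p)

lemma πmap_b1e : πmap p (b1e p) = 0 := by
  rw [πmap_eq_snd_liftDualNumber]
  simp only [b1e, b1raw, NN, map_sum, map_pow, liftDualNumber_of]
  simp [sndChar, t1]

lemma πmap_b2e : πmap p (b2e p) = 0 := by
  rw [πmap_eq_snd_liftDualNumber]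
  simp [b2e, b2raw]

lemma πmap_c12coc [NeZero p] (x y : G12t p) :
    πmap p (c12coc p x y) = -((Multiplicative.toAdd y).1 * (Multiplicative.toAdd x).2) := by
  simp only [c12coc, umn, ← πHom_apply, map_add, map_nsmul, smul_add]
  simp only [πHom_apply, πmap_smul, πmap_u12e, πmap_b1e, πmap_b2e]
  simp [augGen]

lemma πmap_fst_θω [NeZero p] (g : Gp p) (y : RG p) :
    πmap p (θω p g y).1 = -(Multiplicative.toAdd (π12 p g)).2 *
      y.coeff.sum fun g' a => (a : ZMod p) * (Multiplicative.toAdd (π12 p g')).1 := by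
  rw [θω, Finsupp.sum, Prod.fst_sum, ← πHom_apply, map_sum, Finsupp.sum, Finset.mul_sum]
  refine Finset.sum_congr rfl fun g' _ => ?_
  rw [Prod.smul_fst, map_zsmul, πHom_apply, ωc, πmap_c12coc, zsmul_eq_mul]
  ring

lemma πmap_fst_actM_sub (g : Gp p) (m : Mc p) :
    πmap p (actM p g m - m).1.1 = πmap p (θω p g m.2.val).1 := by
  rw [← πHom_apply, ← πHom_apply]
  simp only [actM, actQ, Prod.fst_sub, Prod.fst_add, map_sub, map_add, πHom_apply, πmap_of_smul]
  abel

lemma G34sub_le_ker_π12 : G34sub p ≤ (π12 p).ker := by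
  rw [G34sub, Subgroup.closure_le]
  rintro _ (rfl | rfl) <;> rfl

lemma s3_mem_G34sub : s3 p ∈ G34sub p := Subgroup.subset_closure (Set.mem_insert _ _)

lemma orderOf_s3 [Fact p.Prime] : orderOf (s3 p) = p := by
  refine orderOf_eq_prime (ofAdd_pow_p p _ ?_) ?_
  · simp only [Prod.smul_mk, zmod_p_smul]; rfl
  · simp [s3, Prod.ext_iff]

/-- Both factors are constant on `G₃₄`-cosets, whose order is divisible by `p`. -/
lemma sum_coeff_mul_fst_π12_eq_zero [Fact p.Prime] (y : RG p)
    (hy : ∀ g ∈ G34sub p, of ℤ (Gp p) g * y = y) :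
    (y.coeff.sum fun g a => (a : ZMod p) * (Multiplicative.toAdd (π12 p g)).1) = 0 := by
  rw [Finsupp.sum_fintype _ _ (fun _ => by simp)]
  refine Subgroup.sum_eq_zero_of_mul_right_invariant (G34sub p) (fun m => ?_) _ fun g h hh => ?_
  · obtain ⟨k, hk⟩ : p ∣ Nat.card (G34sub p) := by
      have := orderOf_dvd_natCard (⟨s3 p, s3_mem_G34sub p⟩ : G34sub p)
      rwa [Subgroup.orderOf_mk, orderOf_s3] at this
    rw [hk, mul_comm, mul_nsmul, zmod_p_smul]
  · have hcoeff : y.coeff (g * h) = y.coeff g := by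
      have := congrArg (fun z : RG p => z.coeff (h * g)) (hy h hh)
      simpa [MonoidAlgebra.of_apply, MonoidAlgebra.coeff_single_mul_apply, mul_comm] using this.symm
    rw [hcoeff, map_mul, G34sub_le_ker_π12 p hh, mul_one]

end ProjectionToZModP

theorem statement17_general (p : ℕ) [NeZero p] (hp : p.Prime) :
    ¬ ∃ a b : Mc p,
      (∀ g ∈ G34sub p, actM p g a = a) ∧
      (∀ g ∈ G34sub p, actM p g b = b) ∧
      (((u12e p, 0, 0), 0) : Mc p) =
        (actM p (s1 p) a - a) + (actM p (s2 p) b - b) := by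
  have := Fact.mk hp
  rintro ⟨a, b, -, hb, heq⟩
  have hy (g) (hg : g ∈ G34sub p) : of ℤ (Gp p) g * b.2.val = b.2.val :=
    congrArg (fun m : Mc p => m.2.val) (hb g hg)
  have hπ := congrArg (fun m : Mc p => πmap p m.1.1) heq
  simp only [Prod.fst_add, πmap_add, πmap_fst_actM_sub, πmap_fst_θω,
    sum_coeff_mul_fst_π12_eq_zero p _ hy, πmap_u12e] at hπ
  simp [s1, π12] at hπ

theorem statement17 (p : ℕ) [NeZero p] (hp : p.Prime) (hodd : p ≠ 2) :
    ¬ ∃ a b : Mc p,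
      (∀ g ∈ G34sub p, actM p g a = a) ∧
      (∀ g ∈ G34sub p, actM p g b = b) ∧
      (((u12e p, 0, 0), 0) : Mc p) =
        (actM p (s1 p) a - a) + (actM p (s2 p) b - b) :=
  statement17_general p hp

end
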